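/- arXiv:1208.5895 — 3 statements merged into one kernel-verified Lean document; each statement's English description precedes it below -/
import Mathlib

section
/- Binary consequence of Balloon-Lift: suppose for all heaps h, h₁ ⊑ h, h₂ ⊑ h with h₁ ∈ P₁ and h₂ ∈ P₂ we have h₂ ∈ Q₁ or h ∈ Q₂, where P₁, P₂, Q₁, Q₂ are upward-closed sets of heaps. Then for all binary relations ρ_a, ρ_b on heaps that are componentwise upward closed, (Δ₂(P₁) * ρ_a) ∩ (Δ₂(P₂) * ρ_a * ρ_b) ⊆ (Δ₂(Q₁) * ρ_a * ρ_b) ∪ Δ₂(Q₂). -/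
/-- A heap: a finite partial function from positive integers to integers. -/
abbrev Heap : Type := Finmap (fun _ : ℕ+ => ℤ)

/-- Heap extension order: `hle f h` means `h` extends `f`. -/
def hle (f h : Heap) : Prop := ∀ (x : ℕ+) (v : ℤ), f.lookup x = some v → h.lookup x = some v

/-- Upward-closed sets of heaps. -/
def UpClosed (p : Set Heap) : Prop := ∀ ⦃f h : Heap⦄, f ∈ p → hle f h → h ∈ p

/-- Separating conjunction of sets of heaps. -/
def sep (p q : Set Heap) : Set Heap :=
  { h | ∃ f g : Heap, f ∈ p ∧ g ∈ q ∧ f.Disjoint g ∧ h = f ∪ g }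

/-- Upward closure of a set of heaps. -/
def up (p : Set Heap) : Set Heap := { h | ∃ f ∈ p, hle f h }

/-- The diagonal map `Δ_n`. -/
def Delta (n : ℕ) (p : Set Heap) : Set (Fin n → Heap) :=
  { h | ∃ f ∈ p, ∀ i, hle f (h i) }

/-- Componentwise extension order on `n`-tuples of heaps. -/
def hleN {n : ℕ} (f g : Fin n → Heap) : Prop := ∀ i, hle (f i) (g i)

/-- Componentwise upward-closed `n`-ary heap relations. -/
def UpClosedN {n : ℕ} (r : Set (Fin n → Heap)) : Prop :=
  ∀ ⦃f g : Fin n → Heap⦄, f ∈ r → hleN f g → g ∈ r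

/-- `n`-ary separating conjunction. -/
def sepN {n : ℕ} (r s : Set (Fin n → Heap)) : Set (Fin n → Heap) :=
  { h | ∃ f g : Fin n → Heap, f ∈ r ∧ g ∈ s ∧ (∀ i, (f i).Disjoint (g i)) ∧
        h = fun i => f i ∪ g i }

/-- Componentwise upward-closed binary heap relations. -/
def UpClosed2 (r : Set (Heap × Heap)) : Prop :=
  ∀ ⦃f g : Heap × Heap⦄, f ∈ r → hle f.1 g.1 → hle f.2 g.2 → g ∈ r

/-- Binary separating conjunction. -/
def sep2 (r s : Set (Heap × Heap)) : Set (Heap × Heap) :=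
  { h | ∃ f g : Heap × Heap, f ∈ r ∧ g ∈ s ∧ f.1.Disjoint g.1 ∧ f.2.Disjoint g.2 ∧
        h = (f.1 ∪ g.1, f.2 ∪ g.2) }

/-- Componentwise upward closure of a binary heap relation. -/
def up2 (r : Set (Heap × Heap)) : Set (Heap × Heap) :=
  { h | ∃ f ∈ r, hle f.1 h.1 ∧ hle f.2 h.2 }

/-- The binary interpretation `Δ₂`. -/
def Delta2 (p : Set Heap) : Set (Heap × Heap) :=
  { h | ∃ f ∈ p, hle f h.1 ∧ hle f h.2 }

lemma hle_union_left (f g : Heap) : hle f (f ∪ g) := by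
  intro x v hv
  exact Finmap.mem_lookup_union.mpr (Or.inl hv)

theorem balloon_lift_binary_consequence
    (P1 P2 Q1 Q2 : Set Heap)
    (hP1 : UpClosed P1) (hP2 : UpClosed P2) (hQ1 : UpClosed Q1) (hQ2 : UpClosed Q2)
    (hPC : ∀ h h1 h2 : Heap, hle h1 h → hle h2 h → h1 ∈ P1 → h2 ∈ P2 →
      h2 ∈ Q1 ∨ h ∈ Q2) :
    ∀ ρa ρb : Set (Heap × Heap), UpClosed2 ρa → UpClosed2 ρb →
      sep2 (Delta2 P1) ρa ∩ sep2 (sep2 (Delta2 P2) ρa) ρb ⊆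
        sep2 (sep2 (Delta2 Q1) ρa) ρb ∪ Delta2 Q2 := by
  rintro ρa ρb ha hb p ⟨⟨⟨d1, d2⟩, ⟨a1, a2⟩, ⟨g, hgP, hgd1, hgd2⟩, haρ, hdj1, hdj2, heq⟩,
    ⟨⟨e1, e2⟩, ⟨b1, b2⟩, ⟨⟨e1', e2'⟩, ⟨a1', a2'⟩, ⟨f, hfP, hfe1, hfe2⟩, haρ', hdj1', hdj2', heq'⟩,
      hbρ, hdj1'', hdj2'', heq''⟩⟩
  simp only [Prod.mk.injEq] at heq'
  obtain ⟨he1, he2⟩ := heq'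
  subst he1 he2 heq''
  simp only [Prod.mk.injEq] at heq
  obtain ⟨hE1, hE2⟩ := heq
  -- g ⊑ h1, g ⊑ h2, f ⊑ h1, f ⊑ h2
  have hgh1 : hle g ((e1' ∪ a1') ∪ b1) := by
    rw [hE1]; exact fun x v hv => hle_union_left d1 a1 x v (hgd1 x v hv)
  have hgh2 : hle g ((e2' ∪ a2') ∪ b2) := by
    rw [hE2]; exact fun x v hv => hle_union_left d2 a2 x v (hgd2 x v hv)
  have hfh1 : hle f ((e1' ∪ a1') ∪ b1) := fun x v hv =>
    hle_union_left _ b1 x v (hle_union_left e1' a1' x v (hfe1 x v hv))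
  have hfh2 : hle f ((e2' ∪ a2') ∪ b2) := fun x v hv =>
    hle_union_left _ b2 x v (hle_union_left e2' a2' x v (hfe2 x v hv))
  -- the common heap w := g ∪ f
  have hgw : hle g (g ∪ f) := hle_union_left g f
  have hfw : hle f (g ∪ f) := by
    intro x v hv
    by_cases hx : x ∈ g
    · obtain ⟨v', hv'⟩ := Finmap.mem_iff.mp hx
      have h1g := hgh1 x v' (hv')
      have h1f := hfh1 x v hv
      have : v = v' := by rw [h1g] at h1f; exact (Option.some_inj.mp h1f).symm
      subst this
      exact Finmap.mem_lookup_union.mpr (Or.inl hv')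
    · exact Finmap.mem_lookup_union.mpr (Or.inr ⟨hx, hv⟩)
  have hwh1 : hle (g ∪ f) ((e1' ∪ a1') ∪ b1) := by
    intro x v hv
    rcases Finmap.mem_lookup_union.mp hv with h | ⟨_, h⟩
    · exact hgh1 x v (h)
    · exact hfh1 x v (h)
  have hwh2 : hle (g ∪ f) ((e2' ∪ a2') ∪ b2) := by
    intro x v hv
    rcases Finmap.mem_lookup_union.mp hv with h | ⟨_, h⟩
    · exact hgh2 x v (h)
    · exact hfh2 x v (h)
  rcases hPC (g ∪ f) g f hgw hfw hgP hfP with hQ | hQ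
  · exact Or.inl ⟨(e1' ∪ a1', e2' ∪ a2'), (b1, b2),
      ⟨(e1', e2'), (a1', a2'), ⟨f, hQ, hfe1, hfe2⟩, haρ', hdj1', hdj2', rfl⟩,
      hbρ, hdj1'', hdj2'', rfl⟩
  · exact Or.inr ⟨g ∪ f, hQ, hwh1, hwh2⟩
end

section
/- The ternary failure of the scaled example: there exist componentwise-upward-closed ternary heap relations ρ_a, ρ_b such that D₃ ∩ (ρ_a * ρ_a * ρ_b) ⊄ (D₃ * ρ_a) ∪ (D₃ * ρ_b), where D₃ = {(h₁,h₂,h₃) | 1 ∈ dom hᵢ for all i and h₁(1)=h₂(1)=h₃(1)}. Concretely, take ρ_a = up-closure of {([1↦0],[],[])} ∪ up-closure of {([],[1↦0],[])} and ρ_b = up-closure of {([],[],[1↦0])}: then ([1↦0],[1↦0],[1↦0]) ∈ D₃ ∩ (ρ_a * ρ_a * ρ_b) but both D₃ * ρ_a and D₃ * ρ_b are empty. -/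
/-- Ternary interpretation of `1 ↦ _`. -/
def D3 : Set (Fin 3 → Heap) :=
  { h | ∀ i, (1 : ℕ+) ∈ h i ∧ (h i).lookup 1 = (h 0).lookup 1 }

/-- Componentwise upward closure of a ternary relation. -/
def up3 (r : Set (Fin 3 → Heap)) : Set (Fin 3 → Heap) :=
  { h | ∃ f ∈ r, hleN f h }

/-- Helper: `hle` preserves membership of a key. -/
lemma hle_mem {f h : Heap} (hfh : hle f h) {x : ℕ+} (hx : x ∈ f) : x ∈ h := by
  rcases Finmap.mem_iff.mp hx with ⟨v, hv⟩
  exact Finmap.mem_iff.mpr ⟨v, hfh x v hv⟩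

theorem scaled_example_ternary_failure :
    ∃ ρa ρb : Set (Fin 3 → Heap), UpClosedN ρa ∧ UpClosedN ρb ∧
      ¬ (D3 ∩ sepN (sepN ρa ρa) ρb ⊆ sepN D3 ρa ∪ sepN D3 ρb) := by
  refine ⟨{g | (1 : ℕ+) ∈ g 0 ∨ (1 : ℕ+) ∈ g 1}, {g | (1 : ℕ+) ∈ g 2}, ?_, ?_, ?_⟩
  · rintro f g (hf | hf) hfg
    · exact Or.inl (hle_mem (hfg 0) hf)
    · exact Or.inr (hle_mem (hfg 1) hf)
  · exact fun f g hf hfg => hle_mem (hfg 2) hf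
  · intro hsub
    set s : Heap := Finmap.singleton 1 0 with hs
    have h1s : (1 : ℕ+) ∈ s := by simp [hs]
    have key := hsub (a := fun _ => s) ?_
    · have h1f : ∀ (f g : Fin 3 → Heap), f ∈ D3 → (∀ i, (f i).Disjoint (g i)) →
          ∀ j, (1 : ℕ+) ∉ g j := by
        intro f g hf hd j h1g
        exact hd j 1 (hf j).1 h1g
      rcases key with ⟨f, g, hf, hg, hd, _⟩ | ⟨f, g, hf, hg, hd, _⟩
      · rcases hg with hg | hg
        · exact h1f f g hf hd 0 hg
        · exact h1f f g hf hd 1 hg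
      · exact h1f f g hf hd 2 hg
    · constructor
      · intro i
        refine ⟨h1s, rfl⟩
      · refine ⟨![s, s, ∅], ![∅, ∅, s], ⟨![s, ∅, ∅], ![∅, s, ∅], Or.inl h1s, Or.inr h1s,
          ?_, ?_⟩, h1s, ?_, ?_⟩
        · intro i
          fin_cases i <;> simp [Finmap.Disjoint, Finmap.notMem_empty]
        · funext i; fin_cases i <;> simp [Finmap.union_empty, Finmap.empty_union]
        · intro i
          fin_cases i <;> simp [Finmap.Disjoint, Finmap.notMem_empty]
        · funext i; fin_cases i <;> simp [Finmap.union_empty, Finmap.empty_union]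
end

section
/- For the Shadow-Lift unary consequence (Example 3.1): let P₁, P₂, Q₁, Q₂ be upward-closed sets of heaps and suppose the implication (P₁ * ρ_a * ρ_b) ∩ (P₂ * ρ_a * ρ_b * ρ_b) ⊆ (Q₁ * ρ_a * ρ_b * ρ_b) ∪ (Q₂ * ρ_b * ρ_b) holds for all upward-closed sets of heaps ρ_a, ρ_b. Then for all heaps h and h₁ ⊑ h, h₂ ⊑ h with h₁ ∈ P₁ and h₂ ∈ P₂, we have h₂ ∈ Q₁ or h₂ ∈ Q₂. -/
/- ### Auxiliary lemmas -/

lemma hle_refl' (f : Heap) : hle f f := fun _ _ hv => hv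

lemma hle_trans' {a b c : Heap} (hab : hle a b) (hbc : hle b c) : hle a c :=
  fun x v hv => hbc x v (hab x v hv)

lemma upClosed_up' (p : Set Heap) : UpClosed (up p) := by
  rintro f g ⟨e, he, hef⟩ hfg
  exact ⟨e, he, hle_trans' hef hfg⟩

lemma upClosed_union' {p q : Set Heap} (hp : UpClosed p) (hq : UpClosed q) :
    UpClosed (p ∪ q) := by
  rintro f g (hf | hf) hfg
  · exact Or.inl (hp hf hfg)
  · exact Or.inr (hq hf hfg)

lemma heap_mem_iff_lookup (f : Heap) (x : ℕ+) : x ∈ f ↔ f.lookup x ≠ none := by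
  constructor
  · intro hx hn; exact Finmap.lookup_eq_none.mp hn hx
  · intro hn; by_contra hx; exact hn (Finmap.lookup_eq_none.mpr hx)

lemma heap_mem_of_some {f : Heap} {x : ℕ+} {v : ℤ} (hv : f.lookup x = some v) : x ∈ f :=
  Finmap.mem_iff.mpr ⟨v, hv⟩

lemma heap_lookup_union (f g : Heap) (x : ℕ+) :
    (f ∪ g).lookup x = (f.lookup x).or (g.lookup x) := by
  by_cases hx : x ∈ f
  · obtain ⟨v, hv⟩ := Finmap.mem_iff.mp hx
    rw [Finmap.lookup_union_left hx, hv, Option.or]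
  · rw [Finmap.lookup_union_right hx, Finmap.lookup_eq_none.mpr hx, Option.none_or]

lemma heap_lookup_singleton (a : ℕ+) (b : ℤ) (x : ℕ+) :
    (Finmap.singleton a b : Heap).lookup x = if x = a then some b else none := by
  by_cases hx : x = a
  · subst hx; simp [Finmap.lookup_singleton_eq]
  · rw [if_neg hx, Finmap.lookup_eq_none, Finmap.mem_singleton]; exact hx

lemma exists_restrict (h : Heap) (s : Finset ℕ+) :
    ∃ d : Heap, ∀ x, d.lookup x = if x ∈ s then none else h.lookup x := by
  classical
  induction s using Finset.induction_on with
  | empty => exact ⟨h, by simp⟩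
  | @insert a s ha ih =>
    obtain ⟨d, hd⟩ := ih
    refine ⟨d.erase a, fun x => ?_⟩
    by_cases hx : x = a
    · subst hx; simp [Finmap.lookup_erase]
    · rw [Finmap.lookup_erase_ne hx, hd]; simp [Finset.mem_insert, hx]

theorem shadow_lift_unary_consequence
    (P1 P2 Q1 Q2 : Set Heap)
    (hP1 : UpClosed P1) (hP2 : UpClosed P2) (hQ1 : UpClosed Q1) (hQ2 : UpClosed Q2)
    (hvalid : ∀ ρa ρb : Set Heap, UpClosed ρa → UpClosed ρb →
      sep (sep P1 ρa) ρb ∩ sep (sep (sep P2 ρa) ρb) ρb ⊆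
        sep (sep (sep Q1 ρa) ρb) ρb ∪ sep (sep Q2 ρb) ρb)
    (h h1 h2 : Heap) (hh1 : hle h1 h) (hh2 : hle h2 h)
    (hm1 : h1 ∈ P1) (hm2 : h2 ∈ P2) :
    h2 ∈ Q1 ∨ h2 ∈ Q2 := by
  classical
  set m : ℕ := h.keys.sup (fun y : ℕ+ => (y : ℕ)) with hm
  obtain ⟨n, n', hnc, hn'c⟩ : ∃ n n' : ℕ+, (n : ℕ) = m + 1 ∧ (n' : ℕ) = m + 2 :=
    ⟨⟨m + 1, Nat.succ_pos m⟩, ⟨m + 2, Nat.succ_pos (m + 1)⟩, rfl, rfl⟩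
  have hle_m : ∀ x : ℕ+, x ∈ h → (x : ℕ) ≤ m := fun x hx =>
    Finset.le_sup (f := fun y : ℕ+ => (y : ℕ)) (Finmap.mem_keys.mpr hx)
  have hxn : ∀ x : ℕ+, x ∈ h → x ≠ n := by
    intro x hx he; have := hle_m x hx; rw [he, hnc] at this; omega
  have hxn' : ∀ x : ℕ+, x ∈ h → x ≠ n' := by
    intro x hx he; have := hle_m x hx; rw [he, hn'c] at this; omega
  have hnn' : n ≠ n' := by
    intro e; rw [e, hn'c] at hnc; omega
  have hn'n : ¬ (n' = n) := fun e => hnn' e.symm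
  have hhn : h.lookup n = none :=
    Finmap.lookup_eq_none.mpr (fun hmem => hxn n hmem rfl)
  have hhn' : h.lookup n' = none :=
    Finmap.lookup_eq_none.mpr (fun hmem => hxn' n' hmem rfl)
  have h1h : ∀ x : ℕ+, x ∈ h1 → x ∈ h := by
    intro x hx
    obtain ⟨v, hv⟩ := Finmap.mem_iff.mp hx
    exact heap_mem_of_some (hh1 x v hv)
  have h2h : ∀ x : ℕ+, x ∈ h2 → x ∈ h := by
    intro x hx
    obtain ⟨v, hv⟩ := Finmap.mem_iff.mp hx
    exact heap_mem_of_some (hh2 x v hv)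
  obtain ⟨d1, hd1k⟩ := exists_restrict h h1.keys
  obtain ⟨d2, hd2k⟩ := exists_restrict h h2.keys
  have hd1 : ∀ x, d1.lookup x = if x ∈ h1 then none else h.lookup x := by
    intro x; rw [hd1k x]; by_cases hx : x ∈ h1 <;> simp [hx, Finmap.mem_keys]
  have hd2 : ∀ x, d2.lookup x = if x ∈ h2 then none else h.lookup x := by
    intro x; rw [hd2k x]; by_cases hx : x ∈ h2 <;> simp [hx, Finmap.mem_keys]
  obtain ⟨g1, lookG1⟩ : ∃ g : Heap, ∀ x, g.lookup x =
      if x = n then some 0 else if x = n' then some 0 else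
        if x ∈ h1 then none else h.lookup x := by
    refine ⟨d1 ∪ (Finmap.singleton n 0 ∪ Finmap.singleton n' 0), fun x => ?_⟩
    rw [heap_lookup_union, heap_lookup_union,
        heap_lookup_singleton, heap_lookup_singleton, hd1]
    by_cases hx1 : x = n
    · subst hx1
      have hn1 : x ∉ h1 := fun e => hxn x (h1h x e) rfl
      rw [if_neg hn1, hhn]; simp
    · by_cases hx2 : x = n'
      · subst hx2
        have hn1 : x ∉ h1 := fun e => hxn' x (h1h x e) rfl
        rw [if_neg hn1, hhn']; simp [hn'n]
      · by_cases hx3 : x ∈ h1 <;> simp [hx1, hx2, hx3]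
  obtain ⟨g2, lookG2⟩ : ∃ g : Heap, ∀ x, g.lookup x =
      if x = n then some 0 else if x ∈ h2 then none else h.lookup x := by
    refine ⟨d2 ∪ Finmap.singleton n 0, fun x => ?_⟩
    rw [heap_lookup_union, heap_lookup_singleton, hd2]
    by_cases hx1 : x = n
    · subst hx1
      have hn2 : x ∉ h2 := fun e => hxn x (h2h x e) rfl
      rw [if_neg hn2, hhn]; simp
    · by_cases hx3 : x ∈ h2 <;> simp [hx1, hx3]
  obtain ⟨g3, lookG3⟩ : ∃ g : Heap, ∀ x, g.lookup x =
      if x = n' then some 0 else none :=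
    ⟨Finmap.singleton n' 0, fun x => heap_lookup_singleton n' 0 x⟩
  obtain ⟨H, lookH⟩ : ∃ g : Heap, ∀ x, g.lookup x =
      if x = n then some 0 else if x = n' then some 0 else h.lookup x := by
    refine ⟨h ∪ (Finmap.singleton n 0 ∪ Finmap.singleton n' 0), fun x => ?_⟩
    rw [heap_lookup_union, heap_lookup_union,
        heap_lookup_singleton, heap_lookup_singleton]
    by_cases hx1 : x = n
    · subst hx1; rw [hhn]; simp
    · by_cases hx2 : x = n'
      · subst hx2; rw [hhn']; simp [hn'n]
      · simp [hx1, hx2]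
  -- the predicates
  have hRb_up : UpClosed (up {g1} ∪ (up {g2} ∪ up {g3})) :=
    upClosed_union' (upClosed_up' _) (upClosed_union' (upClosed_up' _) (upClosed_up' _))
  have hRa_up : UpClosed (Set.univ : Set Heap) := fun _ _ _ _ => trivial
  have hg1R : g1 ∈ (up {g1} ∪ (up {g2} ∪ up {g3})) := Or.inl ⟨g1, rfl, hle_refl' g1⟩
  have hg2R : g2 ∈ (up {g1} ∪ (up {g2} ∪ up {g3})) := Or.inr (Or.inl ⟨g2, rfl, hle_refl' g2⟩)
  have hg3R : g3 ∈ (up {g1} ∪ (up {g2} ∪ up {g3})) := Or.inr (Or.inr ⟨g3, rfl, hle_refl' g3⟩)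
  have hEdisj : ∀ f : Heap, Finmap.Disjoint f (∅ : Heap) :=
    fun f x _ hx => Finmap.notMem_empty hx
  -- H belongs to the first conjunct
  have hH1 : H ∈ sep (sep P1 Set.univ) (up {g1} ∪ (up {g2} ∪ up {g3})) := by
    refine ⟨h1, g1, ⟨h1, ∅, hm1, trivial, hEdisj h1, by
      apply Finmap.ext_lookup; intro x
      rw [heap_lookup_union, Finmap.lookup_empty, Option.or_none]⟩, hg1R, ?_, ?_⟩
    · intro x hx hxg
      have hne := (heap_mem_iff_lookup g1 x).mp hxg
      have hxh : x ∈ h := h1h x hx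
      rw [lookG1 x, if_neg (hxn x hxh), if_neg (hxn' x hxh), if_pos hx] at hne
      exact hne rfl
    · apply Finmap.ext_lookup; intro x
      rw [heap_lookup_union, lookG1 x, lookH x]
      by_cases hx1 : x ∈ h1
      · obtain ⟨v, hv⟩ := Finmap.mem_iff.mp hx1
        have hxh : x ∈ h := h1h x hx1
        rw [hv, if_neg (hxn x hxh), if_neg (hxn' x hxh), hh1 x v hv]
        simp
      · rw [Finmap.lookup_eq_none.mpr hx1, Option.none_or]
        by_cases hxa : x = n
        · simp [hxa]
        · by_cases hxb : x = n'
          · simp [hxa, hxb]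
          · simp [hxa, hxb, hx1]
  -- H belongs to the second conjunct
  have hH2 : H ∈ sep (sep (sep P2 Set.univ) (up {g1} ∪ (up {g2} ∪ up {g3}))) (up {g1} ∪ (up {g2} ∪ up {g3})) := by
    have hd2g : Finmap.Disjoint h2 g2 := by
      intro x hx hxg
      have hne := (heap_mem_iff_lookup g2 x).mp hxg
      have hxh : x ∈ h := h2h x hx
      rw [lookG2 x, if_neg (hxn x hxh), if_pos hx] at hne
      exact hne rfl
    refine ⟨h2 ∪ g2, g3, ⟨h2, g2, ⟨h2, ∅, hm2, trivial, hEdisj h2, by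
        apply Finmap.ext_lookup; intro x
        rw [heap_lookup_union, Finmap.lookup_empty, Option.or_none]⟩,
        hg2R, hd2g, rfl⟩, hg3R, ?_, ?_⟩
    · intro x hx hxg3
      have hne := (heap_mem_iff_lookup g3 x).mp hxg3
      rw [lookG3 x] at hne
      by_cases hxb : x = n'
      · rcases Finmap.mem_union.mp hx with hx2 | hxg2
        · exact hxn' x (h2h x hx2) hxb
        · have hne2 := (heap_mem_iff_lookup g2 x).mp hxg2
          have hxnn : ¬ x = n := by rw [hxb]; exact hn'n
          have hx2' : x ∉ h2 := fun e => hxn' x (h2h x e) hxb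
          rw [lookG2 x, if_neg hxnn, if_neg hx2', hxb, hhn'] at hne2
          exact hne2 rfl
      · rw [if_neg hxb] at hne; exact hne rfl
    · apply Finmap.ext_lookup; intro x
      rw [heap_lookup_union, heap_lookup_union, lookG2 x, lookG3 x, lookH x]
      by_cases hxa : x = n
      · rw [hxa]
        have hn2 : n ∉ h2 := fun e => hxn n (h2h n e) rfl
        rw [Finmap.lookup_eq_none.mpr hn2]
        simp [hnn', hn2]
      · by_cases hxb : x = n'
        · rw [hxb]
          have hn'2 : n' ∉ h2 := fun e => hxn' n' (h2h n' e) rfl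
          rw [Finmap.lookup_eq_none.mpr hn'2, hhn']
          simp [hn'n, hn'2]
        · by_cases hx2 : x ∈ h2
          · obtain ⟨v, hv⟩ := Finmap.mem_iff.mp hx2
            rw [hv, hh2 x v hv]
            simp [hxa, hxb]
          · rw [Finmap.lookup_eq_none.mpr hx2]
            simp [hxa, hxb, hx2]
  -- key facts about (up {g1} ∪ (up {g2} ∪ up {g3})) members
  have hg2n : g2.lookup n = some 0 := by rw [lookG2]; simp
  have hRb_cases : ∀ b : Heap, b ∈ (up {g1} ∪ (up {g2} ∪ up {g3})) →
      (b.lookup n = some 0 ∧ b.lookup n' = some 0) ∨ hle g2 b ∨ b.lookup n' = some 0 := by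
    rintro b (⟨f, rfl, hfb⟩ | ⟨f, rfl, hfb⟩ | ⟨f, rfl, hfb⟩)
    · refine Or.inl ⟨hfb n 0 ?_, hfb n' 0 ?_⟩
      · rw [lookG1]; simp
      · rw [lookG1]; simp [hn'n]
    · exact Or.inr (Or.inl hfb)
    · refine Or.inr (Or.inr (hfb n' 0 ?_))
      rw [lookG3]; simp
  have pair : ∀ b1 b2 : Heap, b1 ∈ (up {g1} ∪ (up {g2} ∪ up {g3})) → b2 ∈ (up {g1} ∪ (up {g2} ∪ up {g3})) → Finmap.Disjoint b1 b2 →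
      (hle g2 b1 ∧ b2.lookup n' = some 0) ∨ (hle g2 b2 ∧ b1.lookup n' = some 0) := by
    intro b1 b2 hb1 hb2 hdisj
    have key : ∀ c1 c2 : Heap, Finmap.Disjoint c1 c2 →
        ∀ v w : ℤ, c1.lookup n = some v → c2.lookup n = some w → False := by
      intro c1 c2 hd v w hv hw
      exact hd n (heap_mem_of_some hv) (heap_mem_of_some hw)
    have key' : ∀ c1 c2 : Heap, Finmap.Disjoint c1 c2 →
        ∀ v w : ℤ, c1.lookup n' = some v → c2.lookup n' = some w → False := by
      intro c1 c2 hd v w hv hw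
      exact hd n' (heap_mem_of_some hv) (heap_mem_of_some hw)
    rcases hRb_cases b1 hb1 with ⟨ha1, ha2⟩ | hb1' | hb1'
    · rcases hRb_cases b2 hb2 with ⟨hc1, _⟩ | hc | hc
      · exact absurd (key b1 b2 hdisj 0 0 ha1 hc1) not_false
      · exact absurd (key b1 b2 hdisj 0 0 ha1 (hc n 0 hg2n)) not_false
      · exact absurd (key' b1 b2 hdisj 0 0 ha2 hc) not_false
    · rcases hRb_cases b2 hb2 with ⟨hc1, hc2⟩ | hc | hc
      · exact absurd (key b1 b2 hdisj 0 0 (hb1' n 0 hg2n) hc1) not_false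
      · exact absurd (key b1 b2 hdisj 0 0 (hb1' n 0 hg2n) (hc n 0 hg2n)) not_false
      · exact Or.inl ⟨hb1', hc⟩
    · rcases hRb_cases b2 hb2 with ⟨hc1, hc2⟩ | hc | hc
      · exact absurd (key' b1 b2 hdisj 0 0 hb1' hc2) not_false
      · exact Or.inr ⟨hc, hb1'⟩
      · exact absurd (key' b1 b2 hdisj 0 0 hb1' hc) not_false
  -- main extraction lemma
  have main : ∀ q r1 r2 : Heap, hle g2 r1 → r2.lookup n' = some 0 →
      Finmap.Disjoint q r1 → Finmap.Disjoint q r2 → hle q H → hle q h2 := by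
    intro q r1 r2 hr1 hr2 hdq1 hdq2 hqH x v hv
    have hxq : x ∈ q := heap_mem_of_some hv
    have hxr1 : x ∉ r1 := hdq1 x hxq
    have hxr2 : x ∉ r2 := hdq2 x hxq
    have hr1n : r1.lookup n = some 0 := hr1 n 0 hg2n
    have hxa : x ≠ n := fun e => hxr1 (e ▸ heap_mem_of_some hr1n)
    have hxb : x ≠ n' := fun e => hxr2 (e ▸ heap_mem_of_some hr2)
    have hHx : H.lookup x = some v := hqH x v hv
    rw [lookH x, if_neg hxa, if_neg hxb] at hHx
    have hxh2 : x ∈ h2 := by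
      by_contra hx2
      have : r1.lookup x = some v := hr1 x v (by rw [lookG2 x, if_neg hxa, if_neg hx2]; exact hHx)
      exact hxr1 (heap_mem_of_some this)
    obtain ⟨w, hw⟩ := Finmap.mem_iff.mp hxh2
    have hhw := hh2 x w hw
    rw [hHx] at hhw
    injection hhw with hvw
    rw [hw, hvw]
  -- apply validity
  rcases hvalid Set.univ (up {g1} ∪ (up {g2} ∪ up {g3})) hRa_up hRb_up ⟨hH1, hH2⟩ with hc | hc
  · obtain ⟨c, b2, ⟨e, b1, ⟨q, a, hq, -, hqa, rfl⟩, hb1, heb1, rfl⟩, hb2, hcb2, hHfull⟩ := hc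
    have hd12 : Finmap.Disjoint b1 b2 := fun x hx =>
      hcb2 x (Finmap.mem_union.mpr (Or.inr hx))
    have hqb1 : Finmap.Disjoint q b1 := fun x hx =>
      heb1 x (Finmap.mem_union.mpr (Or.inl hx))
    have hqb2 : Finmap.Disjoint q b2 := fun x hx =>
      hcb2 x (Finmap.mem_union.mpr (Or.inl (Finmap.mem_union.mpr (Or.inl hx))))
    have hqH : hle q H := by
      intro x v hv
      have hxq : x ∈ q := heap_mem_of_some hv
      have e1 : x ∈ q ∪ a := Finmap.mem_union.mpr (Or.inl hxq)
      have e2 : x ∈ (q ∪ a) ∪ b1 := Finmap.mem_union.mpr (Or.inl e1)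
      rw [hHfull, Finmap.lookup_union_left e2, Finmap.lookup_union_left e1,
        Finmap.lookup_union_left hxq]
      exact hv
    rcases pair b1 b2 hb1 hb2 hd12 with ⟨hg2b, hn'b⟩ | ⟨hg2b, hn'b⟩
    · exact Or.inl (hQ1 hq (main q b1 b2 hg2b hn'b hqb1 hqb2 hqH))
    · exact Or.inl (hQ1 hq (main q b2 b1 hg2b hn'b hqb2 hqb1 hqH))
  · obtain ⟨e, b2, ⟨q, b1, hq, hb1, hqb1, rfl⟩, hb2, heb2, hHfull⟩ := hc
    have hd12 : Finmap.Disjoint b1 b2 := fun x hx =>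
      heb2 x (Finmap.mem_union.mpr (Or.inr hx))
    have hqb2 : Finmap.Disjoint q b2 := fun x hx =>
      heb2 x (Finmap.mem_union.mpr (Or.inl hx))
    have hqH : hle q H := by
      intro x v hv
      have hxq : x ∈ q := heap_mem_of_some hv
      have e1 : x ∈ q ∪ b1 := Finmap.mem_union.mpr (Or.inl hxq)
      rw [hHfull, Finmap.lookup_union_left e1, Finmap.lookup_union_left hxq]
      exact hv
    rcases pair b1 b2 hb1 hb2 hd12 with ⟨hg2b, hn'b⟩ | ⟨hg2b, hn'b⟩
    · exact Or.inr (hQ2 hq (main q b1 b2 hg2b hn'b hqb1 hqb2 hqH))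
    · exact Or.inr (hQ2 hq (main q b2 b1 hg2b hn'b hqb2 hqb1 hqH))
end
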